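/- Fix p ∈ (1,∞), a Banach space X, m, N ∈ ℕ, and invertible isometries T₁,…,T_m ∈ L(X). Set T := (1/m) Σ_{k=1}^m T_k. Let A be the set of maps α : {1,…,N} → {1,…,m}, σ the N-cycle on {1,…,N}, and define U := ⊕_{α∈A} U_α on Y := ℓ^p_{N·m^N}(X) = (X^N)^A where U_α(x_k)_k = (T_{α(k)} x_{σ(k)})_k. Define J : X → Y by Jx = ((N m^N)^{-1/p} x)_{k,α} and Q : Y → X by Q(x_{k,α}) = (N m^N)^{-1/q} Σ_{α,k} x_{k,α}, where 1/p + 1/q = 1. Then J is an isometry, Q is a contraction, U is an invertible isometry, and Tⁿ = Q Uⁿ J for all n ∈ {0,…,N}. -/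

import Mathlib

/-! For `n ≤ N` the coordinate `(α, k)` of `Uⁿ J x` is `(N mᴺ)^{-1/p} T_{α k} T_{α (k+1)} ⋯
T_{α (k+n-1)} x`, and the positions `k, …, k+n-1` are distinct. So, for each `k`, as `α` runs
over `A` every word of length `n` in `T₁, …, Tₘ` occurs exactly `m^{N-n}` times; summing over
`(α, k)` gives `N m^{N-n} (T₁ + ⋯ + Tₘ)ⁿ x`, and the normalisations of `J` and `Q` multiply to
`(N mᴺ)⁻¹ = m^{-n} / (N m^{N-n})`. The other claims are norm computations: `U` permutes the
coordinates and applies an isometry to each, `J x` is constant, and `Q` is bounded by Hölder. -/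

open scoped ENNReal

section Stmt18

variable (p : ℝ) {𝕜 : Type*} [RCLike 𝕜] {X : Type*} [NormedAddCommGroup X]
  [NormedSpace 𝕜 X] (m N : ℕ)

/-- The block operator `U = ⊕_α U_α` on `ℓ^p_{N·m^N}(X) = (X^N)^A`, where
`U_α (x_k)_k = (T_{α(k)} x_{σ(k)})_k` and `σ` is the `N`-cycle. -/
noncomputable def bigU (Ts : Fin m → (X ≃ₗᵢ[𝕜] X))
    (y : PiLp (ENNReal.ofReal p) (fun _ : (Fin N → Fin m) × Fin N => X)) :
    PiLp (ENNReal.ofReal p) (fun _ : (Fin N → Fin m) × Fin N => X) :=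
  (WithLp.equiv (ENNReal.ofReal p) (∀ _ : (Fin N → Fin m) × Fin N, X)).symm
    (fun i => Ts (i.1 i.2)
      ((WithLp.equiv (ENNReal.ofReal p) (∀ _ : (Fin N → Fin m) × Fin N, X)) y
        (i.1, finRotate N i.2)))

/-- The injection `J : X → (X^N)^A`, `J x = ((N m^N)^{-1/p} x)_{k,α}`. -/
noncomputable def bigJ (x : X) :
    PiLp (ENNReal.ofReal p) (fun _ : (Fin N → Fin m) × Fin N => X) :=
  (WithLp.equiv (ENNReal.ofReal p) (∀ _ : (Fin N → Fin m) × Fin N, X)).symm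
    (fun _ => ((((N * m ^ N : ℝ)) ^ (-(1 / p)) : ℝ) : 𝕜) • x)

/-- The map `Q : (X^N)^A → X`, `Q((x_{k,α})) = (N m^N)^{-1/q} ∑_{α,k} x_{k,α}`. -/
noncomputable def bigQ (q : ℝ)
    (y : PiLp (ENNReal.ofReal p) (fun _ : (Fin N → Fin m) × Fin N => X)) : X :=
  ((((N * m ^ N : ℝ)) ^ (-(1 / q)) : ℝ) : 𝕜) •
    ∑ i : (Fin N → Fin m) × Fin N,
      (WithLp.equiv (ENNReal.ofReal p) (∀ _ : (Fin N → Fin m) × Fin N, X)) y i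

theorem sum_pow_eq_sum_prod_ofFn {R κ : Type*} [Semiring R] [Fintype κ] (f : κ → R) (n : ℕ) :
    (∑ a, f a) ^ n = ∑ β : Fin n → κ, (List.ofFn fun j => f (β j)).prod := by
  induction n with
  | zero => simp
  | succ n ih =>
    rw [pow_succ', ih, Finset.sum_mul_sum, ← Fintype.sum_prod_type']
    exact Fintype.sum_equiv (Fin.consEquiv fun _ => κ) _ _ fun _ => by simp [List.ofFn_succ]

theorem Real.rpow_neg_one_div_mul_rpow_neg_one_div {B p q : ℝ} (hB : 0 < B)
    (hpq : 1 / p + 1 / q = 1) : B ^ (-(1 / q)) * B ^ (-(1 / p)) = B⁻¹ := by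
  rw [← Real.rpow_add hB, show -(1 / q) + -(1 / p) = -1 by linarith, Real.rpow_neg_one]

section RestrictionSums

variable {κ M : Type*} [Fintype κ] [AddCommMonoid M] {n N : ℕ}

theorem Fin.sum_comp_castLE (hn : n ≤ N) (G : (Fin n → κ) → M) :
    ∑ α : Fin N → κ, G (α ∘ Fin.castLE hn) = Fintype.card κ ^ (N - n) • ∑ β, G β := by
  obtain ⟨r, rfl⟩ := Nat.exists_eq_add_of_le hn
  have append_castLE (β : Fin n → κ) (γ : Fin r → κ) : appendEquiv n r (β, γ) ∘ castLE hn = β :=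
    funext (append_left β γ)
  rw [← (appendEquiv n r).sum_comp, Fintype.sum_prod_type, Finset.smul_sum]
  simp [append_castLE]

theorem Fin.sum_comp_finRotate_iterate (hn : n ≤ N) (k : Fin N) (G : (Fin n → κ) → M) :
    ∑ α : Fin N → κ, G (fun j => α ((finRotate N)^[j] k))
      = Fintype.card κ ^ (N - n) • ∑ β, G β := by
  have orbit (j : Fin n) : (finRotate N)^[j] k = finCycle k (Fin.castLE hn j) := by
    rw [← Fin.val_castLE hn j, ← finCycle_eq_finRotate_iterate, finCycle_apply, finCycle_apply,
      add_comm]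
  simp only [orbit]
  rw [← Fin.sum_comp_castLE hn]
  exact Fintype.sum_equiv ((finCycle k).symm.arrowCongr (Equiv.refl κ)) _ _ fun α => by
    simp [Function.comp_def]

theorem sum_prod_ofFn_finRotate_iterate {R : Type*} [Semiring R] (hn : n ≤ N) (f : κ → R) :
    ∑ i : (Fin N → κ) × Fin N, (List.ofFn fun j : Fin n => f (i.1 ((finRotate N)^[j] i.2))).prod
      = (N * Fintype.card κ ^ (N - n)) • (∑ a, f a) ^ n := by
  rw [Fintype.sum_prod_type, Finset.sum_comm, sum_pow_eq_sum_prod_ofFn,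
    Finset.sum_congr rfl fun k _ =>
      Fin.sum_comp_finRotate_iterate hn k fun β => (List.ofFn fun j => f (β j)).prod,
    Finset.sum_const, Finset.card_univ, Fintype.card_fin, smul_smul]

end RestrictionSums

section PiLp

variable {ι E : Type*} [Fintype ι] [SeminormedAddCommGroup E]

theorem PiLp.norm_sum_le_card_rpow_mul_norm {p : ℝ≥0∞} {q : ℝ} (hpq : p.toReal.HolderConjugate q)
    (y : PiLp p fun _ : ι => E) : ‖∑ i, y i‖ ≤ Fintype.card ι ^ (1 / q) * ‖y‖ := by
  have holder := Real.inner_le_Lp_mul_Lq Finset.univ (fun _ => 1) (fun i => ‖y i‖) hpq.symm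
  simp only [one_mul, abs_one, Real.one_rpow, Finset.sum_const, Finset.card_univ, nsmul_eq_mul,
    mul_one, abs_norm] at holder
  rw [PiLp.norm_eq_sum hpq.pos]
  exact (norm_sum_le _ _).trans holder

variable (p : ℝ≥0∞) [Fact (1 ≤ p)] {𝕜 : Type*} [Semiring 𝕜] [Module 𝕜 E]

noncomputable def LinearIsometryEquiv.piLpWeightedShift (e : Equiv.Perm ι)
    (A : ι → E ≃ₗᵢ[𝕜] E) : PiLp p (fun _ : ι => E) ≃ₗᵢ[𝕜] PiLp p (fun _ : ι => E) :=
  (LinearIsometryEquiv.piLpCongrLeft p 𝕜 E e.symm).trans (LinearIsometryEquiv.piLpCongrRight p A)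

variable {p}

theorem LinearIsometryEquiv.piLpWeightedShift_apply (e : Equiv.Perm ι) (A : ι → E ≃ₗᵢ[𝕜] E)
    (y : PiLp p fun _ : ι => E) (i : ι) : piLpWeightedShift p e A y i = A i (y (e i)) := rfl

theorem LinearIsometryEquiv.piLpWeightedShift_iterate_apply [TopologicalSpace 𝕜]
    (e : Equiv.Perm ι) (A : ι → E ≃ₗᵢ[𝕜] E) (n : ℕ) (y : PiLp p fun _ : ι => E) (i : ι) :
    (piLpWeightedShift p e A)^[n] y i =
      (List.ofFn fun j : Fin n => (A (e^[j] i)).toLinearIsometry.toContinuousLinearMap).prod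
        (y (e^[n] i)) := by
  induction n generalizing i with
  | zero => rfl
  | succ n ih =>
    rw [Function.iterate_succ_apply', piLpWeightedShift_apply, ih, List.ofFn_succ, List.prod_cons]
    simp [Function.iterate_succ_apply]

end PiLp

theorem card_fin_arrow_prod_fin :
    (Fintype.card ((Fin N → Fin m) × Fin N) : ℝ) = N * m ^ N := by
  simp [mul_comm]

section

variable {p m N}

theorem norm_bigJ [Fact (1 ≤ ENNReal.ofReal p)] (hm : 0 < m) (hN : 0 < N) (x : X) :
    ‖bigJ (𝕜 := 𝕜) p m N x‖ = ‖x‖ := by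
  have hp : 0 < p := one_pos.trans_le (ENNReal.one_le_ofReal.1 Fact.out)
  have hB : (0 : ℝ) < N * m ^ N := by positivity
  change ‖WithLp.toLp _ (Function.const _ _)‖ = _
  rw [PiLp.norm_toLp_const ENNReal.ofReal_ne_top, norm_smul, RCLike.norm_ofReal,
    abs_of_pos (Real.rpow_pos_of_pos hB _), one_div, ENNReal.toReal_inv,
    ENNReal.toReal_ofReal hp.le, NNReal.coe_natCast, card_fin_arrow_prod_fin, one_div,
    Real.rpow_neg hB.le, mul_inv_cancel_left₀ (Real.rpow_pos_of_pos hB _).ne']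

theorem norm_bigQ_le {q : ℝ} (hpq : p.HolderConjugate q) (hm : 0 < m) (hN : 0 < N)
    (y : PiLp (ENNReal.ofReal p) (fun _ : (Fin N → Fin m) × Fin N => X)) :
    ‖bigQ (𝕜 := 𝕜) p m N q y‖ ≤ ‖y‖ := by
  have hB : (0 : ℝ) < N * m ^ N := by positivity
  have holder := PiLp.norm_sum_le_card_rpow_mul_norm
    (by rwa [ENNReal.toReal_ofReal hpq.nonneg]) y
  rw [card_fin_arrow_prod_fin] at holder
  change ‖_ • ∑ i, y i‖ ≤ _
  rw [norm_smul, RCLike.norm_ofReal, abs_of_pos (Real.rpow_pos_of_pos hB _), Real.rpow_neg hB.le,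
    inv_mul_le_iff₀ (Real.rpow_pos_of_pos hB _)]
  exact holder

theorem bigU_eq_piLpWeightedShift [Fact (1 ≤ ENNReal.ofReal p)] (Ts : Fin m → (X ≃ₗᵢ[𝕜] X)) :
    bigU p m N Ts = LinearIsometryEquiv.piLpWeightedShift (ENNReal.ofReal p)
      ((Equiv.refl _).prodCongr (finRotate N)) fun i : (Fin N → Fin m) × Fin N => Ts (i.1 i.2) :=
  rfl

theorem bigU_iterate_apply [Fact (1 ≤ ENNReal.ofReal p)] (Ts : Fin m → (X ≃ₗᵢ[𝕜] X)) (n : ℕ)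
    (y : PiLp (ENNReal.ofReal p) (fun _ : (Fin N → Fin m) × Fin N => X))
    (i : (Fin N → Fin m) × Fin N) :
    (bigU p m N Ts)^[n] y i = (List.ofFn fun j : Fin n =>
      (Ts (i.1 ((finRotate N)^[j] i.2))).toLinearIsometry.toContinuousLinearMap).prod
        (y (i.1, (finRotate N)^[n] i.2)) := by
  simp only [bigU_eq_piLpWeightedShift, LinearIsometryEquiv.piLpWeightedShift_iterate_apply,
    Equiv.prodCongr_apply, Equiv.coe_refl, Prod.map_iterate, Function.iterate_id, Prod.map_snd,
    Prod.map_fst, id_eq]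
  rfl

theorem average_pow_apply_eq_bigQ_bigU_iterate_bigJ [Fact (1 ≤ ENNReal.ofReal p)] {q : ℝ}
    (hpq : 1 / p + 1 / q = 1) (hm : 0 < m) (hN : 0 < N) (Ts : Fin m → (X ≃ₗᵢ[𝕜] X)) {n : ℕ}
    (hn : n ≤ N) (x : X) :
    ((((m : 𝕜)⁻¹ • ∑ k, (Ts k).toLinearIsometry.toContinuousLinearMap : X →L[𝕜] X)) ^ n) x
      = bigQ (𝕜 := 𝕜) p m N q ((bigU p m N Ts)^[n] (bigJ (𝕜 := 𝕜) p m N x)) := by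
  set T : Fin m → X →L[𝕜] X := fun k => (Ts k).toLinearIsometry.toContinuousLinearMap
  set B : ℝ := N * m ^ N
  have scalars : B ^ (-(1 / q)) * B ^ (-(1 / p)) * (N * m ^ (N - n) : ℕ) = ((m : ℝ) ^ n)⁻¹ := by
    have hmN : (m : ℝ) ^ N = m ^ (N - n) * m ^ n := by rw [← pow_add, Nat.sub_add_cancel hn]
    rw [Real.rpow_neg_one_div_mul_rpow_neg_one_div (by positivity) hpq]
    simp only [B, hmN]
    push_cast
    field_simp
  have coords (i : (Fin N → Fin m) × Fin N) : (bigU p m N Ts)^[n] (bigJ (𝕜 := 𝕜) p m N x) i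
      = ((B ^ (-(1 / p)) : ℝ) : 𝕜) •
        (List.ofFn fun j : Fin n => T (i.1 ((finRotate N)^[j] i.2))).prod x := by
    rw [bigU_iterate_apply]
    exact map_smul _ _ _
  change _ = _ • ∑ i, (bigU p m N Ts)^[n] (bigJ (𝕜 := 𝕜) p m N x) i
  rw [Finset.sum_congr rfl fun i _ => coords i, ← Finset.smul_sum, ← sum_apply,
    sum_prod_ofFn_finRotate_iterate hn, Fintype.card_fin, smul_pow, ← Nat.cast_smul_eq_nsmul 𝕜,
    smul_apply, smul_apply, smul_smul, smul_smul, inv_pow]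
  congr 1
  have := congrArg (fun r : ℝ => (r : 𝕜)) scalars
  push_cast at this ⊢
  exact this.symm

end

/-- For invertible isometries `T₁, …, T_m` on `X` and
`T = (1/m) ∑ₖ Tₖ`, the maps `J`, `Q`, `U` above give an isometry `J`, a contraction `Q`,
an invertible isometry `U` on `ℓ^p_{N·m^N}(X)`, and `Tⁿ = Q Uⁿ J` for all
`n ∈ {0, …, N}`. -/
theorem equal_weights_N_dilation (q : ℝ) (hp : 1 < p) (hpq : 1 / p + 1 / q = 1)
    (hm : 0 < m) (hN : 0 < N) (Ts : Fin m → (X ≃ₗᵢ[𝕜] X)) :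
    (∀ x : X, ‖bigJ (𝕜 := 𝕜) p m N x‖ = ‖x‖) ∧
    (∀ y : PiLp (ENNReal.ofReal p) (fun _ : (Fin N → Fin m) × Fin N => X),
      ‖bigQ (𝕜 := 𝕜) p m N q y‖ ≤ ‖y‖) ∧
    Function.Bijective (bigU p m N Ts) ∧
    (∀ y : PiLp (ENNReal.ofReal p) (fun _ : (Fin N → Fin m) × Fin N => X),
      ‖bigU p m N Ts y‖ = ‖y‖) ∧
    (∀ n : ℕ, n ≤ N → ∀ x : X,
      ((((m : 𝕜)⁻¹ • ∑ k, (Ts k).toLinearIsometry.toContinuousLinearMap : X →L[𝕜] X)) ^ n) x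
        = bigQ (𝕜 := 𝕜) p m N q ((bigU p m N Ts)^[n] (bigJ (𝕜 := 𝕜) p m N x))) := by
  have : Fact (1 ≤ ENNReal.ofReal p) := ⟨ENNReal.one_le_ofReal.2 hp.le⟩
  have hpq' : p.HolderConjugate q :=
    Real.holderConjugate_iff.2 ⟨hp, by simpa only [one_div] using hpq⟩
  refine ⟨norm_bigJ hm hN, norm_bigQ_le hpq' hm hN, ?_, ?_,
    fun n hn x => average_pow_apply_eq_bigQ_bigU_iterate_bigJ hpq hm hN Ts hn x⟩
  all_goals rw [bigU_eq_piLpWeightedShift]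
  · exact LinearIsometryEquiv.bijective _
  · exact LinearIsometryEquiv.norm_map _

end Stmt18
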